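/- arXiv:1809.00941 — 3 statements merged into one kernel-verified Lean document; each statement's English description precedes it below -/
import Mathlib

section
/- Abstract Möbius inversion: let C be a filtered coalgebra over a field whose degree-zero part C₀ is spanned by group-like elements, and let A be a unital algebra. If φ : C → A is linear and sends every group-like element of C₀ to 1, then φ is invertible in the convolution algebra Lin(C,A), and its inverse is ψ = ∑_{n≥0} (-1)^n (φ - e)^{*n}, which satisfies ψ = e - ψ * (φ - e). -/
/-!
In the convolution ring `Lin(C, A)` write `φ = e + ρ`. Since `ρ` kills the group-like elements,
it vanishes on `C₀`, and the filtration condition then makes `ρ^{*n}` vanish on `C_r` for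
`r < n`. So on each `C_r` the geometric series `∑ (-ρ)^{*n}` is a finite sum, the partial sums
glue to a linear map `ψ`, and the identity `(∑_{n ≤ r} (-ρ)^n) (1 + ρ) = 1 - (-ρ)^{r+1}`
shows that `ψ` is a two-sided inverse of `φ`.
-/

open TensorProduct

section

variable {k : Type*} [Field k] {C : Type*} [AddCommGroup C] [Module k C] [Coalgebra k C]
variable {A : Type*} [CommRing A] [Algebra k A]

/-- Convolution product on `Lin(C, A)`. -/
noncomputable def conv (α β : C →ₗ[k] A) : C →ₗ[k] A :=
  LinearMap.mul' k A ∘ₗ TensorProduct.map α β ∘ₗ Coalgebra.comul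

/-- The convolution unit `e = u ∘ ε`. -/
noncomputable def convUnit : C →ₗ[k] A :=
  Algebra.linearMap k A ∘ₗ Coalgebra.counit

/-- Group-like elements: `Δ x = x ⊗ x` and `ε x = 1`. -/
def IsGroupLike (x : C) : Prop :=
  Coalgebra.comul x = x ⊗ₜ[k] x ∧ Coalgebra.counit x = (1 : k)

/-- The coalgebra filtration condition:
`Δ(Cₙ) ⊆ ∑_{p+q=n} C_p ⊗ C_q`. -/
def ComulFiltered (F : ℕ → Submodule k C) : Prop :=
  ∀ n : ℕ, F n ≤ Submodule.comap (Coalgebra.comul : C →ₗ[k] C ⊗[k] C)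
    (⨆ p ∈ {p : ℕ × ℕ | p.1 + p.2 = n},
      LinearMap.range (TensorProduct.map (F p.1).subtype (F p.2).subtype))

/-- The sequence `ψₙ = (φ - e)^{*n}` (left-bracketed convolution powers),
`ψ₀ = e`, `ψ_{n+1} = ψₙ * (φ - e)`. -/
noncomputable def psiSeq (φ : C →ₗ[k] A) : ℕ → (C →ₗ[k] A)
  | 0 => convUnit
  | n + 1 => conv (psiSeq φ n) (φ - convUnit)

end

open WithConv

theorem Submodule.exists_mem_of_iSup_eq_top {ι R M : Type*} [Preorder ι]
    [IsDirected ι (· ≤ ·)] [Nonempty ι] [Semiring R] [AddCommMonoid M] [Module R M]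
    {F : ι → Submodule R M} (hmono : Monotone F) (hexh : ⨆ i, F i = ⊤) (x : M) :
    ∃ i, x ∈ F i :=
  (Submodule.mem_iSup_of_directed F hmono.directed_le).1 (hexh ▸ Submodule.mem_top)

theorem Submodule.exists_linearMap_eqOn_of_compatible {ι R M N : Type*} [Preorder ι]
    [IsDirected ι (· ≤ ·)] [Nonempty ι] [Semiring R] [AddCommMonoid M] [Module R M]
    [AddCommMonoid N] [Module R N] {F : ι → Submodule R M} (hmono : Monotone F)
    (hexh : ⨆ i, F i = ⊤) (L : ι → M →ₗ[R] N)
    (hL : ∀ i j, i ≤ j → ∀ x ∈ F i, L j x = L i x) :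
    ∃ ψ : M →ₗ[R] N, ∀ i, ∀ x ∈ F i, ψ x = L i x := by
  choose deg hdeg using Submodule.exists_mem_of_iSup_eq_top hmono hexh
  have hψ : ∀ i, ∀ x ∈ F i, L (deg x) x = L i x := by
    intro i x hx
    obtain ⟨j, hxj, hij⟩ := exists_ge_ge (deg x) i
    rw [← hL _ _ hxj x (hdeg x), hL _ _ hij x hx]
  refine ⟨{ toFun := fun x => L (deg x) x, map_add' := ?_, map_smul' := ?_ }, hψ⟩
  · intro x y
    obtain ⟨j, hxj, hyj⟩ := exists_ge_ge (deg x) (deg y)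
    have hx := hmono hxj (hdeg x)
    have hy := hmono hyj (hdeg y)
    simp only [hψ j x hx, hψ j y hy, hψ j _ (add_mem hx hy), map_add]
  · intro c x
    simp only [hψ _ _ (Submodule.smul_mem _ c (hdeg x)), map_smul, RingHom.id_apply]

section Filtered

variable {k C A : Type*} [Field k] [AddCommGroup C] [Module k C] [Coalgebra k C]
  {F : ℕ → Submodule k C}

theorem ComulFiltered.comul_induction (hfilt : ComulFiltered F) {r : ℕ} {x : C}
    (hx : x ∈ F r) {P : C ⊗[k] C → Prop} (zero : P 0)
    (add : ∀ s t, P s → P t → P (s + t))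
    (tmul : ∀ p q, p + q = r → ∀ a ∈ F p, ∀ b ∈ F q, P (a ⊗ₜ b)) :
    P (Coalgebra.comul x) := by
  have hmem := hfilt r hx
  rw [Submodule.mem_comap, iSup_subtype'] at hmem
  refine Submodule.iSup_induction (motive := P) _ hmem ?_ zero add
  rintro ⟨⟨p, q⟩, hpq⟩ _ ⟨t, rfl⟩
  induction t using TensorProduct.induction_on with
  | zero => simpa using zero
  | tmul a b => simpa using tmul p q hpq a a.2 b b.2
  | add u v hu hv => rw [map_add]; exact add _ _ hu hv

variable [Semiring A] [Algebra k A]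

theorem ComulFiltered.mul_apply_eq_zero (hfilt : ComulFiltered F)
    {α β : WithConv (C →ₗ[k] A)} {a b : ℕ} (hα : ∀ p < a, ∀ y ∈ F p, α y = 0)
    (hβ : ∀ q < b, ∀ y ∈ F q, β y = 0) {r : ℕ} (hr : r < a + b) {x : C} (hx : x ∈ F r) :
    (α * β) x = 0 := by
  rw [LinearMap.convMul_apply]
  refine hfilt.comul_induction hx (P := fun t => LinearMap.mul' k A (map α.ofConv β.ofConv t) = 0)
    (by simp) (fun s t hs ht => by simp only [map_add, hs, ht, add_zero]) ?_
  intro p q hpq y hy z hz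
  simp only [map_tmul, LinearMap.mul'_apply]
  rcases lt_or_ge p a with hp | hp
  · rw [hα p hp y hy, zero_mul]
  · rw [hβ q (by omega) z hz, mul_zero]

theorem ComulFiltered.pow_apply_eq_zero (hfilt : ComulFiltered F) {ρ : WithConv (C →ₗ[k] A)}
    (hρ : ∀ y ∈ F 0, ρ y = 0) {n r : ℕ} (hr : r < n) {x : C} (hx : x ∈ F r) :
    (ρ ^ n) x = 0 := by
  induction n generalizing r x with
  | zero => omega
  | succ n ih =>
    rw [pow_succ]
    exact hfilt.mul_apply_eq_zero (fun p hp y hy => ih hp hy)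
      (fun q hq y hy => by rw [Nat.lt_one_iff.1 hq] at hy; exact hρ y hy) hr hx

theorem ComulFiltered.mul_apply_congr (hmono : Monotone F) (hfilt : ComulFiltered F)
    {α α' β β' : WithConv (C →ₗ[k] A)} {r : ℕ} (hα : ∀ y ∈ F r, α y = α' y)
    (hβ : ∀ y ∈ F r, β y = β' y) {x : C} (hx : x ∈ F r) :
    (α * β) x = (α' * β') x := by
  simp only [LinearMap.convMul_apply]
  refine hfilt.comul_induction hx (P := fun t => LinearMap.mul' k A (map α.ofConv β.ofConv t) =
      LinearMap.mul' k A (map α'.ofConv β'.ofConv t))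
    (by simp) (fun s t hs ht => by simp only [map_add, hs, ht]) ?_
  intro p q hpq y hy z hz
  simp only [map_tmul, LinearMap.mul'_apply]
  rw [hα y (hmono (by omega) hy), hβ z (hmono (by omega) hz)]

end Filtered

section Inverse

variable {k C A : Type*} [Field k] [AddCommGroup C] [Module k C] [Coalgebra k C]
  [Ring A] [Algebra k A] {F : ℕ → Submodule k C}

theorem ComulFiltered.exists_inverse_one_add (hmono : Monotone F) (hexh : ⨆ n, F n = ⊤)
    (hfilt : ComulFiltered F) {ρ : WithConv (C →ₗ[k] A)} (hρ : ∀ y ∈ F 0, ρ y = 0) :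
    ∃ ψ : WithConv (C →ₗ[k] A), ψ * (1 + ρ) = 1 ∧ (1 + ρ) * ψ = 1 ∧
      ∀ r, ∀ x ∈ F r, ψ x = ∑ n ∈ Finset.range (r + 1), ((-ρ) ^ n) x := by
  set L : ℕ → WithConv (C →ₗ[k] A) := fun r => ∑ n ∈ Finset.range (r + 1), (-ρ) ^ n
  have hvan : ∀ {n r}, r < n → ∀ x ∈ F r, ((-ρ) ^ n) x = 0 := fun hr x hx =>
    hfilt.pow_apply_eq_zero (fun y hy => by simp [hρ y hy]) hr hx
  have hL : ∀ r s, r ≤ s → ∀ x ∈ F r, (L s) x = (L r) x := by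
    intro r s hrs x hx
    simp only [L, ofConv_sum, LinearMap.sum_apply]
    refine (Finset.sum_subset (Finset.range_subset_range.2 (by omega)) fun n hn hnr => ?_).symm
    exact hvan (by simp at hn hnr; omega) x hx
  obtain ⟨ψ, hψ⟩ := Submodule.exists_linearMap_eqOn_of_compatible hmono hexh
    (fun r => (L r).ofConv) hL
  have hone : ∀ r, ∀ x ∈ F r, (1 - (-ρ) ^ (r + 1)) x = (1 : WithConv (C →ₗ[k] A)) x :=
    fun r x hx => by simp [hvan (Nat.lt_succ_self r) x hx]
  have hψL : ∀ r, ∀ y ∈ F r, toConv ψ y = L r y := hψ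
  refine ⟨toConv ψ, ?_, ?_, fun r x hx => by simpa [L] using hψ r x hx⟩
  · ext x
    obtain ⟨r, hx⟩ := Submodule.exists_mem_of_iSup_eq_top hmono hexh x
    rw [hfilt.mul_apply_congr hmono (hψL r) (fun _ _ => rfl) hx, ← sub_neg_eq_add,
      geom_sum_mul_neg, hone r x hx]
  · ext x
    obtain ⟨r, hx⟩ := Submodule.exists_mem_of_iSup_eq_top hmono hexh x
    rw [hfilt.mul_apply_congr hmono (fun _ _ => rfl) (hψL r) hx, ← sub_neg_eq_add,
      mul_neg_geom_sum, hone r x hx]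

end Inverse


section

variable {k : Type*} [Field k] {C : Type*} [AddCommGroup C] [Module k C] [Coalgebra k C]
variable {A : Type*} [CommRing A] [Algebra k A]

theorem toConv_psiSeq (φ : C →ₗ[k] A) (n : ℕ) :
    toConv (psiSeq φ n) = (toConv φ - 1) ^ n := by
  induction n with
  | zero => rfl
  | succ n ih => rw [pow_succ, ← ih]; rfl

theorem sub_one_apply_eq_zero_of_mem_span_isGroupLike {φ : C →ₗ[k] A}
    (hφ : ∀ x : C, IsGroupLike (k := k) x → φ x = 1) {y : C}
    (hy : y ∈ Submodule.span k {x : C | IsGroupLike (k := k) x}) :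
    (toConv φ - 1) y = 0 :=
  (Submodule.span_le (p := LinearMap.ker (toConv φ - 1).ofConv)).2
    (fun x hx => by simp [hφ x hx, hx.2]) hy

/-- Abstract Möbius inversion: for a filtered coalgebra whose degree-zero part
is spanned by group-like elements, any linear map `φ : C → A` sending
group-like elements to `1` is convolution invertible, and its inverse is
`ψ = ∑_{n ≥ 0} (-1)ⁿ (φ - e)^{*n}` (a locally finite sum), which satisfies
the recursion `ψ = e - ψ * (φ - e)`. -/
theorem abstract_moebius_inversion (F : ℕ → Submodule k C) (hmono : Monotone F)
    (hexh : ⨆ n, F n = ⊤) (hfilt : ComulFiltered F)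
    (hF0 : F 0 = Submodule.span k {x : C | IsGroupLike (k := k) x})
    (φ : C →ₗ[k] A) (hφ : ∀ x : C, IsGroupLike (k := k) x → φ x = 1) :
    ∃ ψ : C →ₗ[k] A,
      conv ψ φ = convUnit ∧ conv φ ψ = convUnit ∧
      ψ = convUnit - conv ψ (φ - convUnit) ∧
      ∀ (r : ℕ) (x : C), x ∈ F r →
        ψ x = ∑ n ∈ Finset.range (r + 1), ((-1 : k) ^ n) • (psiSeq φ n) x := by
  obtain ⟨ψ, hright, hleft, hsum⟩ := hfilt.exists_inverse_one_add hmono hexh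
    (ρ := toConv φ - 1) fun y hy => sub_one_apply_eq_zero_of_mem_span_isGroupLike hφ (hF0 ▸ hy)
  rw [add_sub_cancel] at hright hleft
  have hrec : ψ = 1 - ψ * (toConv φ - 1) := by
    rw [mul_sub, hright, mul_one, sub_sub_cancel]
  -- `conv` and `convUnit` are definitionally the product and unit of `WithConv (C →ₗ[k] A)`.
  refine ⟨ψ.ofConv, congrArg ofConv hright, congrArg ofConv hleft, congrArg ofConv hrec,
    fun r x hx => ?_⟩
  rw [hsum r x hx]
  refine Finset.sum_congr rfl fun n _ => ?_
  rw [← neg_one_smul k (toConv φ - 1), smul_pow, ← toConv_psiSeq]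
  rfl

end
end

section
/- Let A be an algebra and R : A → A an idempotent linear operator. Then Ker(R) and Im(R) are both closed under multiplication if and only if R satisfies the Rota–Baxter equation R(xy) + R(x)R(y) = R(R(x)y + xR(y)) for all x, y ∈ A. -/
/-! Write `x = R x + (x - R x)` with `R x` in the image and `x - R x` in the kernel.
Expanding `x * y` along this splitting, `R` kills the kernel–kernel product and fixes the
image–image product, which leaves exactly the Rota–Baxter identity. Conversely, the identity
with `x, y ∈ ker R` says `R (x * y) = 0`, and with `x, y` fixed by `R` it says
`R (x * y) + x * y = 2 R (x * y)`. -/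

namespace LinearMap

variable {k A : Type*} [Semiring k] [NonUnitalNonAssocRing A] [Module k A] {R : A →ₗ[k] A}

theorem sub_apply_self_mem_ker (hR : IsIdempotentElem R) (x : A) : x - R x ∈ ker R := by
  rw [mem_ker, map_sub, ← Module.End.mul_apply, hR.eq, sub_self]

theorem mul_mem_ker_of_rotaBaxter
    (hRB : ∀ x y : A, R (x * y) + R x * R y = R (R x * y + x * R y))
    {x y : A} (hx : x ∈ ker R) (hy : y ∈ ker R) : x * y ∈ ker R := by
  rw [mem_ker] at hx hy ⊢
  simpa [hx, hy] using hRB x y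

theorem mul_mem_range_of_rotaBaxter (hR : IsIdempotentElem R)
    (hRB : ∀ x y : A, R (x * y) + R x * R y = R (R x * y + x * R y))
    {x y : A} (hx : x ∈ range R) (hy : y ∈ range R) : x * y ∈ range R := by
  rw [IsIdempotentElem.mem_range_iff hR] at hx hy ⊢
  have h := hRB x y
  rw [hx, hy, map_add] at h
  exact (add_left_cancel h).symm

theorem rotaBaxter_of_mul_mem_ker_of_mul_mem_range (hR : IsIdempotentElem R)
    (hker : ∀ x y : A, x ∈ ker R → y ∈ ker R → x * y ∈ ker R)
    (hrange : ∀ x y : A, x ∈ range R → y ∈ range R → x * y ∈ range R) (x y : A) :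
    R (x * y) + R x * R y = R (R x * y + x * R y) := by
  have hkk : R ((x - R x) * (y - R y)) = 0 :=
    hker _ _ (sub_apply_self_mem_ker hR x) (sub_apply_self_mem_ker hR y)
  have hrr : R (R x * R y) = R x * R y :=
    (IsIdempotentElem.mem_range_iff hR).mp (hrange _ _ (mem_range_self R x) (mem_range_self R y))
  have hsplit : x * y = (R x * y + x * R y) - R x * R y + (x - R x) * (y - R y) := by
    simp only [mul_sub, sub_mul]
    abel
  rw [hsplit, map_add, map_sub, hkk, hrr]
  abel

end LinearMap

theorem rotaBaxter_iff_subalgebra_decomposition_general {k : Type*} [Field k]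
    {A : Type*} [NonUnitalRing A] [Module k A]
    (R : A →ₗ[k] A) (hidem : ∀ x : A, R (R x) = R x) :
    ((∀ x y : A, x ∈ LinearMap.ker R → y ∈ LinearMap.ker R → x * y ∈ LinearMap.ker R) ∧
     (∀ x y : A, x ∈ LinearMap.range R → y ∈ LinearMap.range R → x * y ∈ LinearMap.range R))
    ↔ (∀ x y : A, R (x * y) + R x * R y = R (R x * y + x * R y)) := by
  have hR : IsIdempotentElem R := LinearMap.ext hidem
  exact ⟨fun ⟨hker, hrange⟩ => LinearMap.rotaBaxter_of_mul_mem_ker_of_mul_mem_range hR hker hrange,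
    fun hRB => ⟨fun _ _ => LinearMap.mul_mem_ker_of_rotaBaxter hRB,
      fun _ _ => LinearMap.mul_mem_range_of_rotaBaxter hR hRB⟩⟩

/-- Atkinson's lemma: for an idempotent linear operator `R` on a (not
necessarily unital) algebra `A`, the kernel and image of `R` are both closed
under multiplication if and only if `R` satisfies the (weight-one)
Rota–Baxter equation `R(xy) + R(x)R(y) = R(R(x)y + xR(y))`. -/
theorem rotaBaxter_iff_subalgebra_decomposition {k : Type*} [Field k]
    {A : Type*} [NonUnitalRing A] [Module k A] [SMulCommClass k A A] [IsScalarTower k A A]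
    (R : A →ₗ[k] A) (hidem : ∀ x : A, R (R x) = R x) :
    ((∀ x y : A, x ∈ LinearMap.ker R → y ∈ LinearMap.ker R → x * y ∈ LinearMap.ker R) ∧
     (∀ x y : A, x ∈ LinearMap.range R → y ∈ LinearMap.range R → x * y ∈ LinearMap.range R))
    ↔ (∀ x y : A, R (x * y) + R x * R y = R (R x * y + x * R y)) :=
  rotaBaxter_iff_subalgebra_decomposition_general R hidem
end

section
/- Bogoliubov/Atkinson recursion: let C be a filtered coalgebra with C₀ spanned by group-like elements, A a unital algebra, R : A → A a linear projection onto a subspace A₋ with complement A₊ = Ker(R). Let φ : C → A send group-likes to 1, and define ψ by the recursion ψ = e - R((ψ * (φ - e))) (well founded by the filtration). Then: (i) ψ(x) ∈ Im(R) for all x ∈ Ker(ε), and (ii) (ψ * φ)(x) ∈ Ker(R) for all x ∈ Ker(ε). -/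
/-!
The recursion is the fixed-point equation `ψ = T ψ` for `T ψ = e - R (ψ * (φ - e))`. Since
`φ - e` vanishes on `C₀` and `Δ` respects the filtration, `T ψ` on `Cₙ` only depends on `ψ` on
the `C_p` with `p < n`. Hence the iterates `Tᵐ 0` stabilise on every `Cₙ`, and since `C` is the
sum of the `Cₙ` they glue to a fixed point. On `Ker ε` the equation reads
`ψ = -R (ψ * (φ - e)) ∈ Im R`, and `ψ * φ = ψ * (φ - e) + ψ` is killed by `R` because `R² = R`.
-/

open TensorProduct

section

variable {k : Type*} [Field k] {C : Type*} [AddCommGroup C] [Module k C] [Coalgebra k C]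
variable {A : Type*} [CommRing A] [Algebra k A]

open Filter

theorem LinearMap.exists_eventually_eq_of_eventually_const {ι R M N : Type*} [Semiring R]
    [AddCommMonoid M] [Module R M] [AddCommMonoid N] [Module R N] {l : Filter ι} [l.NeBot]
    {f : ι → M →ₗ[R] N} (h : ∀ x, ∃ a, ∀ᶠ i in l, f i x = a) :
    ∃ g : M →ₗ[R] N, ∀ x, ∀ᶠ i in l, f i x = g x := by
  choose g hg using h
  refine ⟨{ toFun := g, map_add' := fun x y => ?_, map_smul' := fun c x => ?_ }, hg⟩
  · obtain ⟨i, hxy, hx, hy⟩ := ((hg (x + y)).and ((hg x).and (hg y))).exists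
    rw [← hxy, ← hx, ← hy, map_add]
  · obtain ⟨i, hcx, hx⟩ := ((hg (c • x)).and (hg x)).exists
    rw [← hcx, ← hx, map_smul, RingHom.id_apply]

section FiltrationContraction

variable {R M N : Type*} [Semiring R] [AddCommMonoid M] [Module R M] [AddCommMonoid N]
  [Module R N]

def IsFiltrationContraction (F : ℕ → Submodule R M) (T : (M →ₗ[R] N) → (M →ₗ[R] N)) : Prop :=
  ∀ (n : ℕ) (α β : M →ₗ[R] N), (∀ p < n, Set.EqOn α β (F p)) → Set.EqOn (T α) (T β) (F n)

variable {F : ℕ → Submodule R M} {T : (M →ₗ[R] N) → (M →ₗ[R] N)}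

theorem IsFiltrationContraction.iterate_eqOn (hT : IsFiltrationContraction F T) {n m m' : ℕ}
    (hm : n < m) (hm' : n < m') (α β : M →ₗ[R] N) : Set.EqOn (T^[m] α) (T^[m'] β) (F n) := by
  induction n using Nat.strong_induction_on generalizing m m' with
  | _ n ih =>
    obtain ⟨m, rfl⟩ := Nat.exists_eq_add_of_lt hm
    obtain ⟨m', rfl⟩ := Nat.exists_eq_add_of_lt hm'
    rw [Function.iterate_succ_apply', Function.iterate_succ_apply']
    exact hT n _ _ fun p hp => ih p hp (by omega) (by omega)

theorem IsFiltrationContraction.exists_fixedPoint (hT : IsFiltrationContraction F T)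
    (hF : ⨆ n, F n = ⊤) : ∃ ψ, T ψ = ψ := by
  have hconst : ∀ x, ∃ a, ∀ᶠ m in atTop, T^[m] 0 x = a := fun x =>
    Submodule.iSup_induction F (motive := fun x => ∃ a, ∀ᶠ m in atTop, T^[m] 0 x = a)
      (hF ▸ Submodule.mem_top)
      (fun n x hx => ⟨T^[n + 1] 0 x, (eventually_gt_atTop n).mono fun m hm =>
        hT.iterate_eqOn hm n.lt_succ_self 0 0 hx⟩)
      ⟨0, .of_forall fun m => map_zero _⟩
      (fun x y ⟨a, ha⟩ ⟨b, hb⟩ => ⟨a + b, (ha.and hb).mono fun m h => by rw [map_add, h.1, h.2]⟩)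
  obtain ⟨ψ, hψ⟩ := LinearMap.exists_eventually_eq_of_eventually_const hconst
  have hψ_eqOn {p m : ℕ} (hpm : p < m) : Set.EqOn ψ (T^[m] 0) (F p) := fun y hy => by
    obtain ⟨M, hM, hpM⟩ := ((hψ y).and (eventually_gt_atTop p)).exists
    rw [← hM]
    exact hT.iterate_eqOn hpM hpm 0 0 hy
  refine ⟨ψ, LinearMap.eqLocus_eq_top.1 (eq_top_iff.2 (hF ▸ iSup_le fun n => ?_))⟩
  refine LinearMap.le_eqLocus.2 fun x hx => ?_
  calc T ψ x = T (T^[n] 0) x := hT n _ _ (fun p hp => hψ_eqOn hp) hx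
    _ = ψ x := by rw [← Function.iterate_succ_apply' T]; exact (hψ_eqOn n.lt_succ_self hx).symm

end FiltrationContraction

lemma convUnit_apply_of_isGroupLike {x : C} (hx : IsGroupLike (k := k) x) :
    (convUnit : C →ₗ[k] A) x = 1 := by
  simp [convUnit, hx.2]

lemma conv_convUnit (α : C →ₗ[k] A) : conv α (convUnit : C →ₗ[k] A) = α := by
  have hmap : TensorProduct.map α (convUnit : C →ₗ[k] A)
      = (TensorProduct.map α (Algebra.linearMap k A)) ∘ₗ
        LinearMap.lTensor C (Coalgebra.counit : C →ₗ[k] k) := by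
    rw [LinearMap.map_comp_lTensor]; rfl
  ext x
  simp only [conv, LinearMap.comp_apply, hmap, Coalgebra.lTensor_counit_comul]
  simp

lemma conv_sub_right (α β γ : C →ₗ[k] A) : conv α (β - γ) = conv α β - conv α γ := by
  rw [eq_sub_iff_add_eq, conv, conv, conv, ← LinearMap.comp_add, ← LinearMap.add_comp,
    ← map_add_right, sub_add_cancel]

lemma span_isGroupLike_le_ker_sub_convUnit {φ : C →ₗ[k] A}
    (hφ : ∀ x : C, IsGroupLike (k := k) x → φ x = 1) :
    Submodule.span k {x : C | IsGroupLike (k := k) x} ≤ LinearMap.ker (φ - convUnit) :=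
  Submodule.span_le.2 fun x hx => by
    simp [hφ x hx, convUnit_apply_of_isGroupLike hx]

lemma conv_eqOn_of_eqOn {F : ℕ → Submodule k C} (hfilt : ComulFiltered F)
    {γ : C →ₗ[k] A} (hγ : F 0 ≤ LinearMap.ker γ) {n : ℕ} {α β : C →ₗ[k] A}
    (hαβ : ∀ p < n, Set.EqOn α β (F p)) : Set.EqOn (conv α γ) (conv β γ) (F n) := by
  intro x hx
  suffices h : (⨆ p ∈ {p : ℕ × ℕ | p.1 + p.2 = n},
      LinearMap.range (TensorProduct.map (F p.1).subtype (F p.2).subtype)) ≤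
      LinearMap.eqLocus (LinearMap.mul' k A ∘ₗ map α γ) (LinearMap.mul' k A ∘ₗ map β γ) from
    h (hfilt n hx)
  refine iSup₂_le fun p (hp : p.1 + p.2 = n) => ?_
  rintro _ ⟨t, rfl⟩
  suffices h : (LinearMap.mul' k A ∘ₗ map α γ) ∘ₗ map (F p.1).subtype (F p.2).subtype =
      (LinearMap.mul' k A ∘ₗ map β γ) ∘ₗ map (F p.1).subtype (F p.2).subtype from
    LinearMap.congr_fun h t
  refine TensorProduct.ext' fun a b => ?_
  simp only [LinearMap.comp_apply, map_tmul, LinearMap.mul'_apply, Submodule.subtype_apply]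
  rcases Nat.eq_zero_or_pos p.2 with h0 | hpos
  · rw [LinearMap.mem_ker.1 (hγ (h0 ▸ b.2)), mul_zero, mul_zero]
  · rw [hαβ p.1 (by omega) a.2]

noncomputable def bogoliubovMap (R : A →ₗ[k] A) (φ : C →ₗ[k] A) (ψ : C →ₗ[k] A) : C →ₗ[k] A :=
  convUnit - R ∘ₗ conv ψ (φ - convUnit)

lemma isFiltrationContraction_bogoliubovMap {F : ℕ → Submodule k C} (hfilt : ComulFiltered F)
    (R : A →ₗ[k] A) {φ : C →ₗ[k] A} (hφ : F 0 ≤ LinearMap.ker (φ - convUnit)) :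
    IsFiltrationContraction F (bogoliubovMap R φ) := fun _ _ _ hαβ x hx => by
  simp only [bogoliubovMap, LinearMap.sub_apply, LinearMap.comp_apply,
    conv_eqOn_of_eqOn hfilt hφ hαβ hx]

theorem bogoliubov_atkinson_general (F : ℕ → Submodule k C)
    (hexh : ⨆ n, F n = ⊤) (hfilt : ComulFiltered F)
    (hF0 : F 0 = Submodule.span k {x : C | IsGroupLike (k := k) x})
    (R : A →ₗ[k] A) (hidem : ∀ a : A, R (R a) = R a)
    (φ : C →ₗ[k] A) (hφ : ∀ x : C, IsGroupLike (k := k) x → φ x = 1) :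
    ∃ ψ : C →ₗ[k] A,
      ψ = convUnit - R ∘ₗ (conv ψ (φ - convUnit)) ∧
      (∀ x : C, Coalgebra.counit (R := k) x = 0 → ψ x ∈ LinearMap.range R) ∧
      (∀ x : C, Coalgebra.counit (R := k) x = 0 → (conv ψ φ) x ∈ LinearMap.ker R) := by
  obtain ⟨ψ, hψ⟩ := (isFiltrationContraction_bogoliubovMap hfilt R
    (hF0 ▸ span_isGroupLike_le_ker_sub_convUnit hφ)).exists_fixedPoint hexh
  have hψ_counit {x : C} (hx : Coalgebra.counit (R := k) x = 0) :
      ψ x = -R (conv ψ (φ - convUnit) x) := by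
    conv_lhs => rw [← hψ]
    simp [bogoliubovMap, convUnit, hx]
  refine ⟨ψ, hψ.symm, fun x hx => ⟨_, (map_neg R _).trans (hψ_counit hx).symm⟩, fun x hx => ?_⟩
  have hsplit : conv ψ φ x = conv ψ (φ - convUnit) x + ψ x := by
    rw [conv_sub_right, conv_convUnit, LinearMap.sub_apply, sub_add_cancel]
  rw [LinearMap.mem_ker, hsplit, map_add, hψ_counit hx, map_neg, hidem, add_neg_cancel]

/-- Bogoliubov/Atkinson recursion: with `R : A → A` a linear projection, and
`φ` sending group-like elements to `1`, the map `ψ` defined by the recursion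
`ψ = e - R(ψ * (φ - e))` satisfies: (i) `ψ(x) ∈ Im R` for `x ∈ Ker ε`, and
(ii) `(ψ * φ)(x) ∈ Ker R` for `x ∈ Ker ε`. -/
theorem bogoliubov_atkinson (F : ℕ → Submodule k C) (hmono : Monotone F)
    (hexh : ⨆ n, F n = ⊤) (hfilt : ComulFiltered F)
    (hF0 : F 0 = Submodule.span k {x : C | IsGroupLike (k := k) x})
    (R : A →ₗ[k] A) (hidem : ∀ a : A, R (R a) = R a)
    (φ : C →ₗ[k] A) (hφ : ∀ x : C, IsGroupLike (k := k) x → φ x = 1) :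
    ∃ ψ : C →ₗ[k] A,
      ψ = convUnit - R ∘ₗ (conv ψ (φ - convUnit)) ∧
      (∀ x : C, Coalgebra.counit (R := k) x = 0 → ψ x ∈ LinearMap.range R) ∧
      (∀ x : C, Coalgebra.counit (R := k) x = 0 → (conv ψ φ) x ∈ LinearMap.ker R) :=
  bogoliubov_atkinson_general F hexh hfilt hF0 R hidem φ hφ

end
end
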